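/- arXiv:1904.08021 — 6 statements merged into one kernel-verified Lean document; each statement's English description precedes it below -/
import Mathlib

section
/- Let (λ_n)_{n≥1} be a sequence of positive real numbers and let C > 0 be a constant such that for all integers n, k ≥ 1 one has exp(-C·√k)·λ_n·λ_k ≤ λ_{n+k} ≤ exp(C·√k)·λ_n·λ_k. Then there exist ρ > 0 and D > 0 such that for all integers n ≥ 1, ρ^n·exp(-D·√n) ≤ λ_n ≤ ρ^n·exp(D·√n). -/
/-!
Taking logarithms, `a n = log λₙ` satisfies `|a (n + k) - a n - a k| ≤ C √k`.
Along the dyadic subsequence the averages `a (2 ^ m) / 2 ^ m` then move by `O(2^{-m/2})`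
per step, so they converge geometrically to some `L`, with `|a (2 ^ m) - L 2 ^ m| = O(√(2 ^ m))`.
The error `b n = a n - L n` is quasi-additive in the same way, and splitting off the leading
binary digit `n = 2 ^ m + t` with `2 t < n` gives `|b n| ≤ K √n` by strong induction, because
`√t ≤ √n / √2` makes the error of the recursion contract. Then `ρ = exp L`.
-/

open Real

theorem Real.sqrt_pow {x : ℝ} (hx : 0 ≤ x) (n : ℕ) : √(x ^ n) = √x ^ n := by
  rw [← Real.sqrt_sq (pow_nonneg (Real.sqrt_nonneg x) n), ← pow_mul, mul_comm, pow_mul,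
    Real.sq_sqrt hx]

def SqrtQuasiAdditive (C : ℝ) (a : ℕ → ℝ) : Prop :=
  ∀ n k : ℕ, 1 ≤ n → 1 ≤ k → |a (n + k) - a n - a k| ≤ C * √k

theorem exists_abs_sub_mul_two_pow_le {u : ℕ → ℝ} {C s : ℝ} (hs : s < 2)
    (hu : ∀ m, |u (m + 1) - 2 * u m| ≤ C * s ^ m) :
    ∃ L : ℝ, ∀ m, |u m - L * 2 ^ m| ≤ C / (2 - s) * s ^ m := by
  have hstep : ∀ m, dist (u m / 2 ^ m) (u (m + 1) / 2 ^ (m + 1)) ≤ C / 2 * (s / 2) ^ m := by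
    intro m
    have hdist : dist (u m / 2 ^ m) (u (m + 1) / 2 ^ (m + 1))
        = |u (m + 1) - 2 * u m| / 2 ^ (m + 1) := by
      rw [dist_comm, Real.dist_eq, ← abs_of_pos (by positivity : (0 : ℝ) < 2 ^ (m + 1)),
        ← abs_div, abs_of_pos (by positivity : (0 : ℝ) < 2 ^ (m + 1))]
      congr 1
      field_simp
      ring
    rw [hdist, div_le_iff₀ (by positivity)]
    calc |u (m + 1) - 2 * u m| ≤ C * s ^ m := hu m
      _ = C / 2 * (s / 2) ^ m * 2 ^ (m + 1) := by rw [div_pow, pow_succ]; field_simp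
  have hr : s / 2 < 1 := by linarith
  obtain ⟨L, hL⟩ := cauchySeq_tendsto_of_complete (cauchySeq_of_le_geometric _ _ hr hstep)
  refine ⟨L, fun m => ?_⟩
  have hdist := dist_le_of_le_geometric_of_tendsto _ _ hr hstep hL m
  have hpow : (0 : ℝ) < 2 ^ m := by positivity
  calc |u m - L * 2 ^ m| = dist (u m / 2 ^ m) L * 2 ^ m := by
        rw [Real.dist_eq, ← abs_of_pos hpow, ← abs_mul, abs_of_pos hpow]
        congr 1
        field_simp
    _ ≤ C / 2 * (s / 2) ^ m / (1 - s / 2) * 2 ^ m := by gcongr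
    _ = C / (2 - s) * s ^ m := by
        have : (2 : ℝ) - s ≠ 0 := by linarith
        rw [div_pow]
        field_simp

namespace SqrtQuasiAdditive

variable {C : ℝ} {a : ℕ → ℝ}

theorem nonneg (ha : SqrtQuasiAdditive C a) : 0 ≤ C := by
  simpa using (abs_nonneg _).trans (ha 1 1 le_rfl le_rfl)

theorem sub_mul (ha : SqrtQuasiAdditive C a) (L : ℝ) :
    SqrtQuasiAdditive C (fun n => a n - L * n) := by
  intro n k hn hk
  convert ha n k hn hk using 2
  push_cast
  ring

theorem exists_abs_sub_mul_two_pow_le (ha : SqrtQuasiAdditive C a) :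
    ∃ L C' : ℝ, ∀ m, |a (2 ^ m) - L * (2 ^ m : ℕ)| ≤ C' * √(2 ^ m : ℕ) := by
  have hdouble : ∀ m, |a (2 ^ (m + 1)) - 2 * a (2 ^ m)| ≤ C * √2 ^ m := by
    intro m
    have h := ha (2 ^ m) (2 ^ m) Nat.one_le_two_pow Nat.one_le_two_pow
    rw [← two_mul, ← pow_succ'] at h
    push_cast at h
    rw [Real.sqrt_pow zero_le_two] at h
    convert h using 2
    ring
  have hs : √2 < 2 := by
    rw [Real.sqrt_lt' two_pos]
    norm_num
  obtain ⟨L, hL⟩ := _root_.exists_abs_sub_mul_two_pow_le (u := fun m => a (2 ^ m)) hs hdouble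
  refine ⟨L, C / (2 - √2), fun m => ?_⟩
  push_cast
  rw [Real.sqrt_pow zero_le_two]
  exact hL m

theorem abs_le_of_abs_two_pow_le (ha : SqrtQuasiAdditive C a) {C' : ℝ}
    (hdyadic : ∀ m, |a (2 ^ m)| ≤ C' * √(2 ^ m : ℕ)) :
    ∀ n, 1 ≤ n → |a n| ≤ (2 + √2) * (C + C') * √n := by
  set K := (2 + √2) * (C + C') with hKdef
  have hC := ha.nonneg
  have hC' : 0 ≤ C' := by simpa using (abs_nonneg _).trans (hdyadic 0)
  have hsqrt2_pos : 0 < √2 := by positivity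
  -- `2 + √2 = 1 / (1 - 1 / √2)` absorbs the factor `1 / √2` lost per induction step.
  have hK : C + K + C' * √2 ≤ K * √2 := by
    have hsqrt2_ge : 1 ≤ √2 := Real.one_le_sqrt.mpr one_le_two
    rw [hKdef]
    nlinarith [Real.mul_self_sqrt (zero_le_two : (0 : ℝ) ≤ 2),
      mul_le_mul_of_nonneg_left hsqrt2_ge hC]
  have hC'K : C' ≤ K := by nlinarith
  have hK0 : 0 ≤ K := hC'.trans hC'K
  clear_value K
  intro n
  induction n using Nat.strong_induction_on with
  | _ n ih =>
    intro hn
    obtain ⟨m, hlow, hhigh⟩ : ∃ m, 2 ^ m ≤ n ∧ n < 2 ^ (m + 1) :=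
      ⟨Nat.log 2 n, Nat.pow_log_le_self 2 (by omega), Nat.lt_pow_succ_log_self (by norm_num) n⟩
    have hsqrt_two_pow : √(2 ^ m : ℕ) ≤ √n := Real.sqrt_le_sqrt (by exact_mod_cast hlow)
    obtain ⟨t, rfl⟩ := Nat.exists_eq_add_of_le hlow
    rcases Nat.eq_zero_or_pos t with rfl | ht
    · exact (hdyadic m).trans (by gcongr)
    have htwo : 2 * t < 2 ^ m + t := by rw [pow_succ] at hhigh; omega
    have hsqrt_t : √t * √2 ≤ √(2 ^ m + t : ℕ) := by
      rw [← Real.sqrt_mul (Nat.cast_nonneg _)]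
      exact Real.sqrt_le_sqrt (by exact_mod_cast (by omega : t * 2 ≤ 2 ^ m + t))
    have hsplit : |a (2 ^ m + t)| ≤ C * √t + C' * √(2 ^ m : ℕ) + K * √t := by
      calc |a (2 ^ m + t)|
          = |(a (2 ^ m + t) - a (2 ^ m) - a t) + a (2 ^ m) + a t| := by congr 1; ring
        _ ≤ |a (2 ^ m + t) - a (2 ^ m) - a t| + |a (2 ^ m)| + |a t| := abs_add_three _ _ _
        _ ≤ C * √t + C' * √(2 ^ m : ℕ) + K * √t := by
          gcongr
          · exact ha _ _ Nat.one_le_two_pow ht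
          · exact hdyadic m
          · exact ih t (by omega) ht
    refine hsplit.trans (le_of_mul_le_mul_right ?_ hsqrt2_pos)
    nlinarith [mul_le_mul_of_nonneg_left hsqrt_two_pow hC',
      mul_le_mul_of_nonneg_left hsqrt_t (add_nonneg hC hK0),
      mul_le_mul_of_nonneg_right hK (Real.sqrt_nonneg (2 ^ m + t : ℕ))]

theorem exists_abs_sub_mul_le (ha : SqrtQuasiAdditive C a) :
    ∃ L K : ℝ, ∀ n, 1 ≤ n → |a n - L * n| ≤ K * √n := by
  obtain ⟨L, C', hdyadic⟩ := ha.exists_abs_sub_mul_two_pow_le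
  exact ⟨L, _, (ha.sub_mul L).abs_le_of_abs_two_pow_le hdyadic⟩

end SqrtQuasiAdditive

theorem abs_log_sub_log_sub_log_le {x y z ε : ℝ} (hx : 0 < x) (hy : 0 < y) (hz : 0 < z)
    (hlower : exp (-ε) * x * y ≤ z) (hupper : z ≤ exp ε * x * y) :
    |log z - log x - log y| ≤ ε := by
  have hlog : ∀ δ, log (exp δ * x * y) = δ + log x + log y := fun δ => by
    rw [log_mul (by positivity) hy.ne', log_mul (exp_pos δ).ne' hx.ne', log_exp]
  have h₁ := log_le_log (by positivity) hlower
  have h₂ := log_le_log hz hupper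
  rw [hlog] at h₁ h₂
  rw [abs_le]
  constructor <;> linarith

theorem sqrtQuasiAdditive_log {lam : ℕ → ℝ} {C : ℝ}
    (hpos : ∀ n : ℕ, 1 ≤ n → 0 < lam n)
    (hmul : ∀ n k : ℕ, 1 ≤ n → 1 ≤ k →
      exp (-C * √k) * lam n * lam k ≤ lam (n + k) ∧
      lam (n + k) ≤ exp (C * √k) * lam n * lam k) :
    SqrtQuasiAdditive C (fun n => log (lam n)) := fun n k hn hk =>
  abs_log_sub_log_sub_log_le (hpos n hn) (hpos k hk) (hpos (n + k) (by omega))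
    (by simpa only [neg_mul] using (hmul n k hn hk).1) (hmul n k hn hk).2

theorem weak_multiplicativity_exponent_general
    (lam : ℕ → ℝ) (C : ℝ)
    (hpos : ∀ n : ℕ, 1 ≤ n → 0 < lam n)
    (hmul : ∀ n k : ℕ, 1 ≤ n → 1 ≤ k →
      Real.exp (-C * Real.sqrt k) * lam n * lam k ≤ lam (n + k) ∧
      lam (n + k) ≤ Real.exp (C * Real.sqrt k) * lam n * lam k) :
    ∃ ρ : ℝ, 0 < ρ ∧ ∃ D : ℝ, 0 < D ∧ ∀ n : ℕ, 1 ≤ n →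
      ρ ^ n * Real.exp (-D * Real.sqrt n) ≤ lam n ∧
      lam n ≤ ρ ^ n * Real.exp (D * Real.sqrt n) := by
  obtain ⟨L, K, hK⟩ := (sqrtQuasiAdditive_log hpos hmul).exists_abs_sub_mul_le
  refine ⟨exp L, exp_pos L, max K 1, by positivity, fun n hn => ?_⟩
  have hbound := abs_le.mp ((hK n hn).trans
    (mul_le_mul_of_nonneg_right (le_max_left K 1) (Real.sqrt_nonneg n)))
  rw [← exp_log (hpos n hn), ← exp_nat_mul, ← exp_add, ← exp_add, exp_le_exp, exp_le_exp]
  constructor <;> linarith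

/-- Weak multiplicativity with error `exp(C√k)` implies existence of an exponent `ρ`
with error `exp(O(√n))`. -/
theorem weak_multiplicativity_exponent
    (lam : ℕ → ℝ) (C : ℝ) (hC : 0 < C)
    (hpos : ∀ n : ℕ, 1 ≤ n → 0 < lam n)
    (hmul : ∀ n k : ℕ, 1 ≤ n → 1 ≤ k →
      Real.exp (-C * Real.sqrt k) * lam n * lam k ≤ lam (n + k) ∧
      lam (n + k) ≤ Real.exp (C * Real.sqrt k) * lam n * lam k) :
    ∃ ρ : ℝ, 0 < ρ ∧ ∃ D : ℝ, 0 < D ∧ ∀ n : ℕ, 1 ≤ n →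
      ρ ^ n * Real.exp (-D * Real.sqrt n) ≤ lam n ∧
      lam n ≤ ρ ^ n * Real.exp (D * Real.sqrt n) :=
  weak_multiplicativity_exponent_general lam C hpos hmul
end

section
/- Let (λ_n)_{n≥1} be a sequence of positive real numbers and define the sequence (a_n)_{n≥0} by λ_{2^{n+1}} = (λ_{2^n})²·exp(a_n). Assume M := sup_{n≥0} 2^{-n/2}·|a_n| < ∞. Then there exists ρ > 0 such that for all integers n ≥ 0, |log λ_{2^n} − 2^n·log ρ| ≤ 4·M·2^{n/2}. Moreover one may take ρ = λ₁·exp((1/2)·Σ_{k=0}^∞ a_k·2^{-k}). -/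
/-- Iterating `λ_{2^{n+1}} = (λ_{2^n})² e^{a_n}` with `2^{-n/2}|a_n|` bounded by `M`
yields an exponent `ρ` with `|log λ_{2^n} − 2^n log ρ| ≤ 4M·2^{n/2}`; one may take
`ρ = λ₁ · exp((1/2)·Σ_k a_k 2^{-k})`. -/
theorem dyadic_exponent_quantitative
    (lam a : ℕ → ℝ) (hlam1 : 0 < lam 1)
    (hrel : ∀ n : ℕ, lam (2 ^ (n + 1)) = (lam (2 ^ n)) ^ 2 * Real.exp (a n))
    (M : ℝ)
    (hM : ∀ n : ℕ, (2 : ℝ) ^ (-(n : ℝ) / 2) * |a n| ≤ M) :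
    ∃ ρ : ℝ, ρ = lam 1 * Real.exp ((1 / 2) * ∑' k : ℕ, a k * (2 : ℝ) ^ (-(k : ℝ))) ∧
      0 < ρ ∧
      ∀ n : ℕ, |Real.log (lam (2 ^ n)) - 2 ^ n * Real.log ρ| ≤
        4 * M * (2 : ℝ) ^ ((n : ℝ) / 2) := by
  have two0 : (0:ℝ) < 2 := by norm_num
  set q : ℝ := (2:ℝ) ^ (-(1:ℝ)/2) with hq_def
  have hq0 : 0 < q := Real.rpow_pos_of_pos two0 _
  have hq1 : q < 1 := Real.rpow_lt_one_of_one_lt_of_neg (by norm_num) (by norm_num)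
  set p : ℝ := (2:ℝ)⁻¹ with hp_def
  have hpq : p = q * q := by
    rw [hq_def, ← Real.rpow_add two0]
    norm_num
  -- rewrite rpow to pow
  have hpow : ∀ k : ℕ, (2:ℝ) ^ (-(k:ℝ)) = p ^ k := by
    intro k
    rw [Real.rpow_neg two0.le, Real.rpow_natCast, hp_def, inv_pow]
  have hqpow : ∀ k : ℕ, (2:ℝ) ^ (-(k:ℝ)/2) = q ^ k := by
    intro k
    rw [hq_def, ← Real.rpow_natCast ((2:ℝ)^(-(1:ℝ)/2)) k, ← Real.rpow_mul two0.le]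
    ring_nf
  -- basic bounds
  have hak : ∀ k : ℕ, q ^ k * |a k| ≤ M := by
    intro k; have := hM k; rwa [hqpow k] at this
  have hM0 : 0 ≤ M := le_trans (by positivity) (hak 0)
  have hf_bound : ∀ k : ℕ, |a k * p ^ k| ≤ M * q ^ k := by
    intro k
    rw [abs_mul, abs_pow, abs_of_nonneg (by positivity : (0:ℝ) ≤ p), hpq, mul_pow]
    calc |a k| * (q ^ k * q ^ k) = (q ^ k * |a k|) * q ^ k := by ring
      _ ≤ M * q ^ k := by
          apply mul_le_mul_of_nonneg_right (hak k) (by positivity)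
  have hgeo : Summable (fun k : ℕ => M * q ^ k) :=
    (summable_geometric_of_lt_one hq0.le hq1).mul_left M
  have hf_sum : Summable (fun k : ℕ => a k * p ^ k) := by
    apply Summable.of_abs
    exact hgeo.of_nonneg_of_le (fun k => abs_nonneg _) hf_bound
  -- positivity of lam (2^n)
  have hpos : ∀ n : ℕ, 0 < lam (2 ^ n) := by
    intro n
    induction n with
    | zero => simpa using hlam1
    | succ n ih =>
      rw [hrel n]
      positivity
  -- log recursion
  have hLrec : ∀ n : ℕ, Real.log (lam (2 ^ (n+1))) = 2 * Real.log (lam (2 ^ n)) + a n := by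
    intro n
    rw [hrel n, Real.log_mul (pow_ne_zero _ (hpos n).ne') (Real.exp_ne_zero _), Real.log_exp,
      Real.log_pow]
    push_cast; ring
  -- tail sums
  set T : ℕ → ℝ := fun n => ∑' j : ℕ, a (n + j) * p ^ (n + j) with hT_def
  have hTsum : ∀ n : ℕ, Summable (fun j : ℕ => a (n + j) * p ^ (n + j)) := by
    intro n
    exact (summable_nat_add_iff n).2 hf_sum |>.congr (fun j => by rw [add_comm j n])
  have hTrec : ∀ n : ℕ, T n = a n * p ^ n + T (n + 1) := by
    intro n
    simp only [hT_def]
    rw [Summable.tsum_eq_zero_add (hTsum n)]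
    simp only [add_zero]
    congr 1
    apply tsum_congr
    intro j
    congr 2 <;> omega
  have hTbound : ∀ n : ℕ, |T n| ≤ M * q ^ n * (1 - q)⁻¹ := by
    intro n
    have h1 : |T n| ≤ ∑' j : ℕ, M * q ^ (n + j) := by
      calc |T n| ≤ ∑' j : ℕ, |a (n + j) * p ^ (n + j)| := by
            have hs2 : Summable fun j : ℕ => ‖a (n + j) * p ^ (n + j)‖ :=
              (hTsum n).abs.congr (fun j => (Real.norm_eq_abs _).symm)
            have h := norm_tsum_le_tsum_norm hs2
            simp only [Real.norm_eq_abs] at h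
            exact h
        _ ≤ ∑' j : ℕ, M * q ^ (n + j) := by
            apply Summable.tsum_le_tsum (fun j => hf_bound (n + j)) (hTsum n).abs
            exact ((summable_nat_add_iff n).2 hgeo).congr (fun j => by rw [add_comm j n])
    have h2 : ∑' j : ℕ, M * q ^ (n + j) = M * q ^ n * (1 - q)⁻¹ := by
      have : ∀ j : ℕ, M * q ^ (n + j) = (M * q ^ n) * q ^ j := by
        intro j; rw [pow_add]; ring
      rw [tsum_congr this, tsum_mul_left, tsum_geometric_of_lt_one hq0.le hq1]
    exact h1.trans_eq h2
  -- the exponent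
  set S : ℝ := ∑' k : ℕ, a k * (2:ℝ) ^ (-(k:ℝ)) with hS_def
  have hS_eq : S = T 0 := by
    rw [hS_def, hT_def]
    apply tsum_congr
    intro k
    rw [hpow k]; norm_num
  refine ⟨lam 1 * Real.exp ((1/2) * S), rfl, by positivity, ?_⟩
  have hlogρ : Real.log (lam 1 * Real.exp ((1/2) * S)) = Real.log (lam (2 ^ 0)) + S / 2 := by
    rw [Real.log_mul hlam1.ne' (Real.exp_ne_zero _), Real.log_exp]
    norm_num
    ring
  set r : ℝ := Real.log (lam 1 * Real.exp ((1/2) * S)) with hr_def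
  -- closed form for the difference
  have hD : ∀ n : ℕ, Real.log (lam (2 ^ n)) - 2 ^ n * r = -((2:ℝ) ^ n * T n / 2) := by
    intro n
    induction n with
    | zero =>
      simp only [pow_zero, one_mul]
      rw [hlogρ, hS_eq]; ring
    | succ n ih =>
      have hpn : (2:ℝ) ^ n * p ^ n = 1 := by
        rw [hp_def, ← mul_pow]; norm_num
      rw [hLrec n]
      linear_combination 2*ih - (2:ℝ)^n * (hTrec n) - a n * hpn
  intro n
  rw [hD n, abs_neg, abs_div, abs_mul]
  have h2n : |(2:ℝ) ^ n| = (2:ℝ) ^ n := abs_of_pos (by positivity)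
  rw [h2n]
  have key : (2:ℝ) ^ n * |T n| / |2| ≤ (2:ℝ) ^ n * (M * q ^ n * (1 - q)⁻¹) / 2 := by
    rw [abs_two]
    gcongr
    exact hTbound n
  refine key.trans ?_
  -- 2^n * q^n = 2^{n/2}
  have hq78 : q ≤ 7/8 := by
    have hq2 : q * q = (2:ℝ)⁻¹ := hpq ▸ rfl
    nlinarith [hq0.le]
  have h2q : (2:ℝ) * q = (2:ℝ) ^ ((1:ℝ)/2) := by
    rw [hq_def]
    nth_rewrite 1 [← Real.rpow_one (2:ℝ)]
    rw [← Real.rpow_add two0]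
    norm_num
  have hs : (2:ℝ) ^ ((n:ℝ)/2) = (2:ℝ) ^ n * q ^ n := by
    rw [← mul_pow, h2q, ← Real.rpow_natCast ((2:ℝ) ^ ((1:ℝ)/2)) n, ← Real.rpow_mul two0.le]
    congr 1
    ring
  rw [hs]
  have h1q : (0:ℝ) < 1 - q := by linarith
  have hinv : (1 - q)⁻¹ ≤ 8 := by
    rw [inv_le_comm₀ h1q (by norm_num)]
    linarith
  have hx : (0:ℝ) ≤ (2:ℝ) ^ n * q ^ n := by positivity
  calc (2:ℝ) ^ n * (M * q ^ n * (1 - q)⁻¹) / 2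
      = (M * (1 - q)⁻¹ / 2) * ((2:ℝ) ^ n * q ^ n) := by ring
    _ ≤ (4 * M) * ((2:ℝ) ^ n * q ^ n) := by
        apply mul_le_mul_of_nonneg_right ?_ hx
        nlinarith [hinv, hM0]
    _ = 4 * M * ((2:ℝ) ^ n * q ^ n) := by ring
end

section
/- For every δ ∈ (0, 1] and every r ≥ 0, ∫_{δ²}^{1} (1/t)·(1 − exp(−r²/(2t))) dt ≤ 2·r/δ. -/
lemma one_sub_exp_neg_le_sqrt (z : ℝ) (hz : 0 ≤ z) :
    1 - Real.exp (-z) ≤ Real.sqrt z := by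
  rcases le_or_gt z 1 with h | h
  · have h1 : 1 - Real.exp (-z) ≤ z := by nlinarith [Real.add_one_le_exp (-z)]
    have h2 : z ≤ Real.sqrt z := by
      nlinarith [Real.sq_sqrt hz, Real.sqrt_nonneg z, Real.sqrt_le_one.mpr h]
    linarith
  · have h2 : (1 : ℝ) ≤ Real.sqrt z := by
      rw [show (1:ℝ) = Real.sqrt 1 by simp]
      exact Real.sqrt_le_sqrt h.le
    have := Real.exp_pos (-z)
    linarith

/-- The analytic core of the variance bound for the heat-kernel mollified field:
`∫_{δ²}^1 (1/t)(1 − e^{−r²/(2t)}) dt ≤ 2r/δ`. -/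
theorem integral_one_sub_exp_div_le
    (δ r : ℝ) (hδ : δ ∈ Set.Ioc (0 : ℝ) 1) (hr : 0 ≤ r) :
    ∫ t in (δ ^ 2)..1, (1 / t) * (1 - Real.exp (-r ^ 2 / (2 * t))) ≤ 2 * r / δ := by
  obtain ⟨hδ0, hδ1⟩ := hδ
  have hδ2 : (0:ℝ) < δ ^ 2 := by positivity
  have hle : δ ^ 2 ≤ 1 := by nlinarith
  have hpt : ∀ t ∈ Set.Icc (δ ^ 2) 1,
      (1 / t) * (1 - Real.exp (-r ^ 2 / (2 * t))) ≤ r * t ^ (-(3/2) : ℝ) := by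
    intro t ht
    have ht0 : 0 < t := lt_of_lt_of_le hδ2 ht.1
    have hst : 0 < Real.sqrt t := Real.sqrt_pos.2 ht0
    have hz : 0 ≤ r ^ 2 / (2 * t) := by positivity
    have h1 : 1 - Real.exp (-(r ^ 2 / (2 * t))) ≤ Real.sqrt (r ^ 2 / (2 * t)) :=
      one_sub_exp_neg_le_sqrt _ hz
    have h2 : Real.sqrt (r ^ 2 / (2 * t)) ≤ Real.sqrt (r ^ 2 / t) := by
      apply Real.sqrt_le_sqrt
      rw [div_le_div_iff₀ (by positivity) ht0]
      nlinarith
    have h3 : Real.sqrt (r ^ 2 / t) = r / Real.sqrt t := by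
      rw [Real.sqrt_div (by positivity), Real.sqrt_sq hr]
    have h4 : t ^ (-(3/2) : ℝ) = 1 / (t * Real.sqrt t) := by
      rw [Real.sqrt_eq_rpow, Real.rpow_neg ht0.le, one_div]
      congr 1
      rw [show ((3:ℝ)/2) = 1 + 1/2 by norm_num, Real.rpow_add ht0, Real.rpow_one]
    rw [h4, neg_div]
    have hexp : 1 - Real.exp (-(r ^ 2 / (2 * t))) ≤ r / Real.sqrt t := by
      rw [← h3]; exact le_trans h1 h2
    have ht1 : (0:ℝ) < 1 / t := by positivity
    calc (1 / t) * (1 - Real.exp (-(r ^ 2 / (2 * t)))) ≤ (1 / t) * (r / Real.sqrt t) :=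
          mul_le_mul_of_nonneg_left hexp ht1.le
      _ = r * (1 / (t * Real.sqrt t)) := by field_simp
  have hcont1 : ContinuousOn
      (fun t : ℝ => (1 / t) * (1 - Real.exp (-r ^ 2 / (2 * t)))) (Set.Icc (δ ^ 2) 1) := by
    have hne : ∀ t ∈ Set.Icc (δ ^ 2) 1, t ≠ 0 :=
      fun t ht => ne_of_gt (lt_of_lt_of_le hδ2 ht.1)
    apply ContinuousOn.mul
    · exact continuousOn_const.div continuousOn_id hne
    · apply continuousOn_const.sub
      apply Real.continuous_exp.comp_continuousOn
      exact continuousOn_const.div (continuousOn_const.mul continuousOn_id)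
        (fun t ht => by simpa using hne t ht)
  have hcont2 : ContinuousOn (fun t : ℝ => r * t ^ (-(3/2) : ℝ)) (Set.Icc (δ ^ 2) 1) := by
    apply continuousOn_const.mul
    exact ContinuousOn.rpow_const continuousOn_id
      (fun t ht => Or.inl (ne_of_gt (lt_of_lt_of_le hδ2 ht.1)))
  have hi1 : IntervalIntegrable
      (fun t : ℝ => (1 / t) * (1 - Real.exp (-r ^ 2 / (2 * t)))) MeasureTheory.volume (δ ^ 2) 1 := by
    apply ContinuousOn.intervalIntegrable
    rwa [Set.uIcc_of_le hle]
  have hi2 : IntervalIntegrable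
      (fun t : ℝ => r * t ^ (-(3/2) : ℝ)) MeasureTheory.volume (δ ^ 2) 1 := by
    apply ContinuousOn.intervalIntegrable
    rwa [Set.uIcc_of_le hle]
  have hmono := intervalIntegral.integral_mono_on hle hi1 hi2 hpt
  have hval : ∫ t in (δ ^ 2)..1, r * t ^ (-(3/2) : ℝ) = r * (2 / δ - 2) := by
    rw [intervalIntegral.integral_const_mul]
    rw [integral_rpow (Or.inr ⟨by norm_num, by
      rw [Set.uIcc_of_le hle]
      simp only [Set.mem_Icc, not_and_or, not_le]
      exact Or.inl hδ2⟩)]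
    have h1 : ((1:ℝ)) ^ (-(3/2) + 1 : ℝ) = 1 := Real.one_rpow _
    have h2 : ((δ ^ 2 : ℝ)) ^ (-(3/2) + 1 : ℝ) = 1 / δ := by
      rw [show (-(3/2) + 1 : ℝ) = -(1/2) by norm_num, Real.rpow_neg (by positivity),
        ← Real.rpow_natCast δ 2, ← Real.rpow_mul hδ0.le]
      norm_num
    rw [h1, h2]
    field_simp
    ring
  rw [hval] at hmono
  have hfin : r * (2 / δ - 2) ≤ 2 * r / δ := by
    have he : r * (2 / δ - 2) = 2 * r / δ - 2 * r := by field_simp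
    rw [he]
    linarith
  linarith
end

section
/- Let X and Y be nonnegative random variables on a probability space, let C ≥ 1, p₀ ∈ (0, C^{-2}), and r₀ > 0 with P(X ≤ r₀) ≤ p₀. Assume: (i) P(X ≤ l) ≤ (P(Y ≤ l))² for every l > 0; and (ii) for every l > 0 and every ε ∈ (0, p₀], if P(X ≤ l) ≤ ε then P(Y ≤ l·C^{-1}·exp(−C·√(log(1/(C·ε))))) ≤ C·ε. Then there exist constants A > 0 and c > 0, depending only on C and p₀, such that for all s ≥ 2, P(X ≤ r₀·exp(−A·s)) ≤ exp(−c·s²). -/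
open MeasureTheory

noncomputable def btP (C p₀ : ℝ) : ℕ → ℝ
  | 0 => p₀
  | n + 1 => (C * btP C p₀ n) ^ 2

noncomputable def btR (C p₀ r₀ : ℝ) : ℕ → ℝ
  | 0 => r₀
  | n + 1 => btR C p₀ r₀ n * C⁻¹ *
      Real.exp (-C * Real.sqrt (Real.log (1 / (C * btP C p₀ n))))

lemma btP_pos {C p₀ : ℝ} (hC : 0 < C) (hp : 0 < p₀) : ∀ n, 0 < btP C p₀ n
  | 0 => hp
  | n + 1 => by
      have h := btP_pos hC hp n
      simp only [btP]
      exact pow_pos (mul_pos hC h) 2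

lemma bt_sqrt_pow (x : ℝ) (hx : 0 ≤ x) : ∀ n : ℕ, Real.sqrt (x ^ n) = Real.sqrt x ^ n
  | 0 => by simp
  | n + 1 => by
      rw [pow_succ, Real.sqrt_mul (pow_nonneg hx n), bt_sqrt_pow x hx n, pow_succ]

lemma btP_upper {C p₀ : ℝ} (hC : 1 ≤ C) (hp : 0 < p₀) :
    ∀ n, C ^ 2 * btP C p₀ n ≤ (C ^ 2 * p₀) ^ (2 ^ n)
  | 0 => by simp [btP]
  | n + 1 => by
      have ih := btP_upper hC hp n
      have hC0 : (0:ℝ) < C := lt_of_lt_of_le one_pos hC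
      have hb := (btP_pos hC0 hp n).le
      have h1 : C ^ 2 * btP C p₀ (n + 1) = (C ^ 2 * btP C p₀ n) ^ 2 := by
        simp only [btP]; ring
      rw [h1, pow_succ 2 n, pow_mul]
      exact pow_le_pow_left₀ (by positivity) ih 2

lemma btP_lower {C p₀ : ℝ} (hC : 1 ≤ C) (hp : 0 < p₀) :
    ∀ n, p₀ ^ (2 ^ n) ≤ btP C p₀ n
  | 0 => by simp [btP]
  | n + 1 => by
      have ih := btP_lower hC hp n
      have hb := btP_pos (lt_of_lt_of_le one_pos hC) hp n
      have h1 : btP C p₀ n ^ 2 ≤ btP C p₀ (n + 1) := by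
        simp only [btP]
        have h2 : btP C p₀ n ≤ C * btP C p₀ n := le_mul_of_one_le_left hb.le hC
        nlinarith
      calc p₀ ^ 2 ^ (n + 1) = (p₀ ^ 2 ^ n) ^ 2 := by rw [← pow_mul, pow_succ]
        _ ≤ btP C p₀ n ^ 2 := pow_le_pow_left₀ (by positivity) ih 2
        _ ≤ _ := h1

lemma btP_le_p0 {C p₀ : ℝ} (hC : 1 ≤ C) (hp : 0 < p₀) (hp2 : C ^ 2 * p₀ < 1) (n : ℕ) :
    btP C p₀ n ≤ p₀ := by
  have hC0 : (0:ℝ) < C := lt_of_lt_of_le one_pos hC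
  have h := btP_upper hC hp n
  have hθ : (C ^ 2 * p₀) ^ (2 ^ n) ≤ C ^ 2 * p₀ :=
    pow_le_of_le_one (by positivity) hp2.le (by positivity)
  have : C ^ 2 * btP C p₀ n ≤ C ^ 2 * p₀ := h.trans hθ
  exact le_of_mul_le_mul_left this (by positivity)

lemma btR_pos {C p₀ r₀ : ℝ} (hC : 0 < C) (hr : 0 < r₀) : ∀ n, 0 < btR C p₀ r₀ n
  | 0 => hr
  | n + 1 => by
      have h := btR_pos (C := C) (p₀ := p₀) hC hr n
      simp only [btR]
      exact mul_pos (mul_pos h (inv_pos.mpr hC)) (Real.exp_pos _)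

lemma btR_lower {C p₀ r₀ : ℝ} (hC : 1 ≤ C) (hp : 0 < p₀) (hr : 0 < r₀) :
    ∀ n, r₀ * Real.exp (-(3 * (Real.log C + C * Real.sqrt (Real.log (1 / p₀))) + 1)
        * Real.sqrt 2 ^ n) ≤ btR C p₀ r₀ n
  | 0 => by
      have hlC : 0 ≤ Real.log C := Real.log_nonneg hC
      have hsM : 0 ≤ C * Real.sqrt (Real.log (1 / p₀)) :=
        mul_nonneg (by linarith) (Real.sqrt_nonneg _)
      simp only [btR, pow_zero, mul_one]
      have : Real.exp (-(3 * (Real.log C + C * Real.sqrt (Real.log (1 / p₀))) + 1)) ≤ 1 :=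
        Real.exp_le_one_iff.mpr (by linarith)
      nlinarith
  | n + 1 => by
      have hC0 : (0:ℝ) < C := lt_of_lt_of_le one_pos hC
      set M := Real.log (1 / p₀) with hMdef
      set sM := Real.sqrt M with hsMdef
      set lC := Real.log C with hlCdef
      set K := 3 * (lC + C * sM) + 1 with hKdef
      have ih := btR_lower hC hp hr n
      have hbp := btP_pos hC0 hp n
      have hlC : 0 ≤ lC := Real.log_nonneg hC
      have hsM : 0 ≤ sM := Real.sqrt_nonneg _
      -- bound the sqrt term
      have hlog : Real.log (1 / (C * btP C p₀ n)) ≤ 2 ^ n * M := by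
        have h1 : Real.log (1 / (C * btP C p₀ n)) = -lC - Real.log (btP C p₀ n) := by
          rw [one_div, Real.log_inv, Real.log_mul (ne_of_gt hC0) (ne_of_gt hbp), hlCdef]; ring
        have h2' : (2:ℝ) ^ n * Real.log p₀ ≤ Real.log (btP C p₀ n) := by
          have h := Real.log_le_log (by positivity) (btP_lower hC hp n)
          rwa [Real.log_pow, Nat.cast_pow, Nat.cast_ofNat] at h
        have hMeq : M = -Real.log p₀ := by rw [hMdef, one_div, Real.log_inv]
        have h3 : (2:ℝ) ^ n * M = -((2:ℝ) ^ n * Real.log p₀) := by rw [hMeq]; ring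
        rw [h1]
        linarith [h2', h3, hlC]
      have hsqrt : Real.sqrt (Real.log (1 / (C * btP C p₀ n))) ≤ Real.sqrt 2 ^ n * sM := by
        calc Real.sqrt (Real.log (1 / (C * btP C p₀ n)))
            ≤ Real.sqrt ((2:ℝ) ^ n * M) := Real.sqrt_le_sqrt hlog
          _ = Real.sqrt 2 ^ n * sM := by
              rw [Real.sqrt_mul (by positivity), bt_sqrt_pow 2 (by norm_num)]
      -- the key arithmetic inequality
      have hs2 : (7:ℝ)/5 ≤ Real.sqrt 2 := by
        nlinarith [Real.sq_sqrt (by norm_num : (0:ℝ) ≤ 2), Real.sqrt_nonneg 2]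
      have hpow1 : (1:ℝ) ≤ Real.sqrt 2 ^ n := one_le_pow₀ (by nlinarith)
      have key : K * Real.sqrt 2 ^ n + lC + C * (Real.sqrt 2 ^ n * sM)
          ≤ K * Real.sqrt 2 ^ (n + 1) := by
        rw [pow_succ, hKdef]
        nlinarith [mul_nonneg (mul_nonneg hC0.le hsM) (sub_nonneg.mpr hpow1),
          mul_nonneg hlC (sub_nonneg.mpr hpow1),
          mul_nonneg (mul_nonneg hC0.le hsM) (pow_nonneg (Real.sqrt_nonneg 2) n),
          mul_le_mul_of_nonneg_left hs2 (mul_nonneg (mul_nonneg hC0.le hsM)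
            (pow_nonneg (Real.sqrt_nonneg 2) n)),
          mul_le_mul_of_nonneg_left hs2 (pow_nonneg (Real.sqrt_nonneg 2) n)]
      have hCinv : C⁻¹ = Real.exp (-lC) := by rw [Real.exp_neg, hlCdef, Real.exp_log hC0]
      calc r₀ * Real.exp (-K * Real.sqrt 2 ^ (n + 1))
          ≤ r₀ * Real.exp (-K * Real.sqrt 2 ^ n) * C⁻¹
              * Real.exp (-C * (Real.sqrt 2 ^ n * sM)) := by
            rw [hCinv, mul_assoc, mul_assoc, ← Real.exp_add, ← Real.exp_add]
            apply mul_le_mul_of_nonneg_left _ hr.le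
            apply Real.exp_le_exp.mpr
            linarith [key]
        _ ≤ btR C p₀ r₀ n * C⁻¹
              * Real.exp (-C * Real.sqrt (Real.log (1 / (C * btP C p₀ n)))) := by
            have he : Real.exp (-C * (Real.sqrt 2 ^ n * sM))
                ≤ Real.exp (-C * Real.sqrt (Real.log (1 / (C * btP C p₀ n)))) := by
              apply Real.exp_le_exp.mpr
              have := mul_le_mul_of_nonneg_left hsqrt hC0.le
              linarith
            apply mul_le_mul
            · exact mul_le_mul_of_nonneg_right ih (by positivity)
            · exact he
            · exact (Real.exp_pos _).le
            · exact mul_nonneg (btR_pos hC0 hr n).le (by positivity)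
        _ = btR C p₀ r₀ (n + 1) := by simp only [btR]

/-- Abstract lower-tail bootstrap: independence squaring (i) together with an RSW-type
quantile comparison (ii) yields a Gaussian lower tail for `X`. -/
theorem lower_tail_bootstrap
    {Ω : Type*} [MeasurableSpace Ω] (P : Measure Ω) [IsProbabilityMeasure P]
    (X Y : Ω → ℝ) (hX : ∀ ω, 0 ≤ X ω) (hY : ∀ ω, 0 ≤ Y ω)
    (C p₀ r₀ : ℝ) (hC : 1 ≤ C) (hp₀ : p₀ ∈ Set.Ioo 0 ((C ^ 2)⁻¹)) (hr₀ : 0 < r₀)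
    (hinit : (P {ω | X ω ≤ r₀}).toReal ≤ p₀)
    (hsq : ∀ l : ℝ, 0 < l →
      (P {ω | X ω ≤ l}).toReal ≤ ((P {ω | Y ω ≤ l}).toReal) ^ 2)
    (hrsw : ∀ l : ℝ, 0 < l → ∀ ε ∈ Set.Ioc (0 : ℝ) p₀,
      (P {ω | X ω ≤ l}).toReal ≤ ε →
      (P {ω | Y ω ≤ l * C⁻¹ *
          Real.exp (-C * Real.sqrt (Real.log (1 / (C * ε))))}).toReal ≤ C * ε) :
    ∃ A : ℝ, 0 < A ∧ ∃ c : ℝ, 0 < c ∧ ∀ s : ℝ, 2 ≤ s →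
      (P {ω | X ω ≤ r₀ * Real.exp (-A * s)}).toReal ≤ Real.exp (-c * s ^ 2) := by
  obtain ⟨hp0, hp1⟩ := hp₀
  have hC0 : (0:ℝ) < C := lt_of_lt_of_le one_pos hC
  have hp2 : C ^ 2 * p₀ < 1 := by
    have := mul_lt_mul_of_pos_left hp1 (show (0:ℝ) < C ^ 2 by positivity)
    rwa [mul_inv_cancel₀ (by positivity)] at this
  set K : ℝ := 3 * (Real.log C + C * Real.sqrt (Real.log (1 / p₀))) + 1 with hKdef
  have hlC : 0 ≤ Real.log C := Real.log_nonneg hC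
  have hK : 0 < K := by
    have : 0 ≤ C * Real.sqrt (Real.log (1 / p₀)) :=
      mul_nonneg hC0.le (Real.sqrt_nonneg _)
    rw [hKdef]; linarith
  have hθ0 : (0:ℝ) < C ^ 2 * p₀ := by positivity
  set c : ℝ := -Real.log (C ^ 2 * p₀) with hcdef
  have hc : 0 < c := by
    have := Real.log_neg hθ0 hp2
    rw [hcdef]; linarith
  -- the main induction
  have key : ∀ n, (P {ω | X ω ≤ btR C p₀ r₀ n}).toReal ≤ btP C p₀ n := by
    intro n
    induction n with
    | zero => simpa [btR, btP] using hinit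
    | succ n ih =>
      have hrpos := btR_pos (p₀ := p₀) hC0 hr₀ n
      have hppos := btP_pos hC0 hp0 n
      have hple := btP_le_p0 hC hp0 hp2 n
      have hYb := hrsw (btR C p₀ r₀ n) hrpos (btP C p₀ n) ⟨hppos, hple⟩ ih
      have hrpos' := btR_pos (p₀ := p₀) hC0 hr₀ (n + 1)
      have hXb := hsq (btR C p₀ r₀ (n + 1)) hrpos'
      have heq : btR C p₀ r₀ (n + 1) = btR C p₀ r₀ n * C⁻¹ *
          Real.exp (-C * Real.sqrt (Real.log (1 / (C * btP C p₀ n)))) := by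
        simp only [btR]
      calc (P {ω | X ω ≤ btR C p₀ r₀ (n + 1)}).toReal
          ≤ ((P {ω | Y ω ≤ btR C p₀ r₀ (n + 1)}).toReal) ^ 2 := hXb
        _ ≤ (C * btP C p₀ n) ^ 2 := by
            apply pow_le_pow_left₀ ENNReal.toReal_nonneg
            rw [heq]; exact hYb
        _ = btP C p₀ (n + 1) := by simp only [btP]
  -- monotonicity of the tail function
  have mono : ∀ a b : ℝ, a ≤ b →
      (P {ω | X ω ≤ a}).toReal ≤ (P {ω | X ω ≤ b}).toReal := by
    intro a b hab
    exact ENNReal.toReal_mono (measure_ne_top P _)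
      (measure_mono (fun ω hω => le_trans hω hab))
  refine ⟨2 * K, by linarith, c, hc, fun s hs => ?_⟩
  set n : ℕ := ⌈Real.logb 2 (s ^ 2)⌉₊ with hn
  have hs0 : (0:ℝ) < s := by linarith
  have hs1 : (1:ℝ) ≤ s ^ 2 := by nlinarith
  have hlb0 : 0 ≤ Real.logb 2 (s ^ 2) := Real.logb_nonneg one_lt_two hs1
  have h1 : s ^ 2 ≤ (2:ℝ) ^ n := by
    have hle := Nat.le_ceil (Real.logb 2 (s ^ 2))
    calc s ^ 2 = (2:ℝ) ^ (Real.logb 2 (s ^ 2)) :=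
          (Real.rpow_logb two_pos (by norm_num) (by positivity)).symm
      _ ≤ (2:ℝ) ^ ((n:ℝ)) := Real.rpow_le_rpow_of_exponent_le one_le_two hle
      _ = (2:ℝ) ^ n := Real.rpow_natCast 2 n
  have h2 : (2:ℝ) ^ n ≤ 2 * s ^ 2 := by
    have hceil : (n:ℝ) ≤ Real.logb 2 (s ^ 2) + 1 := by
      have := Nat.ceil_lt_add_one hlb0
      rw [hn]; linarith
    calc (2:ℝ) ^ n = (2:ℝ) ^ ((n:ℝ)) := (Real.rpow_natCast 2 n).symm
      _ ≤ (2:ℝ) ^ (Real.logb 2 (s ^ 2) + 1) :=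
          Real.rpow_le_rpow_of_exponent_le one_le_two hceil
      _ = 2 * s ^ 2 := by
          rw [Real.rpow_add two_pos, Real.rpow_logb two_pos (by norm_num) (by positivity),
            Real.rpow_one]; ring
  -- (√2)^n ≤ 2 s
  have hsq2 : (Real.sqrt 2 ^ n) ^ 2 = (2:ℝ) ^ n := by
    rw [← pow_mul, mul_comm, pow_mul, Real.sq_sqrt (by norm_num : (0:ℝ) ≤ 2)]
  have hsn : Real.sqrt 2 ^ n ≤ 2 * s := by
    have h0 : 0 ≤ Real.sqrt 2 ^ n := pow_nonneg (Real.sqrt_nonneg 2) n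
    nlinarith [hsq2, h2, hs0]
  -- chain of inequalities
  have hstep1 : r₀ * Real.exp (-(2 * K) * s) ≤ btR C p₀ r₀ n := by
    have hexp : Real.exp (-(2 * K) * s) ≤ Real.exp (-K * Real.sqrt 2 ^ n) := by
      apply Real.exp_le_exp.mpr
      nlinarith [hsn, hK]
    calc r₀ * Real.exp (-(2 * K) * s) ≤ r₀ * Real.exp (-K * Real.sqrt 2 ^ n) :=
          mul_le_mul_of_nonneg_left hexp hr₀.le
      _ ≤ btR C p₀ r₀ n := btR_lower hC hp0 hr₀ n
  have hfin : btP C p₀ n ≤ Real.exp (-c * s ^ 2) := by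
    have hb1 : btP C p₀ n ≤ (C ^ 2 * p₀) ^ (2 ^ n) := by
      have h := btP_upper hC hp0 n
      have := le_mul_of_one_le_left (btP_pos hC0 hp0 n).le
        (show (1:ℝ) ≤ C ^ 2 by nlinarith)
      linarith
    have hb2 : (C ^ 2 * p₀) ^ (2 ^ n) = Real.exp (((2 ^ n : ℕ) : ℝ) * Real.log (C ^ 2 * p₀)) := by
      rw [Real.exp_nat_mul, Real.exp_log hθ0]
    have hcast : ((2 ^ n : ℕ) : ℝ) = (2:ℝ) ^ n := by push_cast; ring
    have hb3 : ((2 ^ n : ℕ) : ℝ) * Real.log (C ^ 2 * p₀) ≤ -c * s ^ 2 := by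
      rw [hcast]
      have hlogθ : Real.log (C ^ 2 * p₀) = -c := by rw [hcdef]; ring
      rw [hlogθ]
      nlinarith [h1, hc]
    calc btP C p₀ n ≤ (C ^ 2 * p₀) ^ (2 ^ n) := hb1
      _ = Real.exp (((2 ^ n : ℕ) : ℝ) * Real.log (C ^ 2 * p₀)) := hb2
      _ ≤ Real.exp (-c * s ^ 2) := Real.exp_le_exp.mpr hb3
  calc (P {ω | X ω ≤ r₀ * Real.exp (-(2 * K) * s)}).toReal
      ≤ (P {ω | X ω ≤ btR C p₀ r₀ n}).toReal := mono _ _ hstep1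
    _ ≤ btP C p₀ n := key n
    _ ≤ Real.exp (-c * s ^ 2) := hfin
end

section
/- Let K ≥ 1 be an integer and C₁, C₂, C₃, C₄ > 0 constants. Let (Λ_n)_{n≥0} be a nondecreasing sequence of real numbers with Λ_n ≥ 1 for all n, such that: (i) Λ_K ≤ exp(C₄·√K); (ii) for every n > K, Λ_n ≤ max(Λ_{n−1}, exp(C₃·√(C₁·K + exp(−C₂·K)·(Λ_{n−K})²))); and (iii) exp(−C₂·K)·(exp(C₄·√K) + exp(C₃·√(2·C₁·K)))² ≤ C₁·K. Then for every n ≥ 0, Λ_n ≤ max(Λ_K, exp(C₃·√(2·C₁·K))); in particular sup_{n≥0} Λ_n < ∞. -/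
/-- The induction closing the multiscale argument: the recursive inequality for the
quantile ratios `Λ_n` keeps them bounded by `max(Λ_K, exp(C₃√(2C₁K)))` for all `n`. -/
theorem quantile_ratio_induction
    (K : ℕ) (hK : 1 ≤ K) (C₁ C₂ C₃ C₄ : ℝ)
    (hC₁ : 0 < C₁) (hC₂ : 0 < C₂) (hC₃ : 0 < C₃) (hC₄ : 0 < C₄)
    (Λ : ℕ → ℝ) (hmono : Monotone Λ) (hge1 : ∀ n, 1 ≤ Λ n)
    (hinit : Λ K ≤ Real.exp (C₄ * Real.sqrt K))
    (hrec : ∀ n : ℕ, K < n → Λ n ≤ max (Λ (n - 1))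
      (Real.exp (C₃ * Real.sqrt (C₁ * K + Real.exp (-C₂ * K) * (Λ (n - K)) ^ 2))))
    (hKbig : Real.exp (-C₂ * K) *
        (Real.exp (C₄ * Real.sqrt K) + Real.exp (C₃ * Real.sqrt (2 * C₁ * K))) ^ 2 ≤
        C₁ * K) :
    (∀ n : ℕ, Λ n ≤ max (Λ K) (Real.exp (C₃ * Real.sqrt (2 * C₁ * K)))) ∧
      BddAbove (Set.range Λ) := by
  set M : ℝ := max (Λ K) (Real.exp (C₃ * Real.sqrt (2 * C₁ * K))) with hM
  have hMsum : M ≤ Real.exp (C₄ * Real.sqrt K) + Real.exp (C₃ * Real.sqrt (2 * C₁ * K)) := by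
    apply max_le
    · exact hinit.trans (le_add_of_nonneg_right (Real.exp_pos _).le)
    · exact le_add_of_nonneg_left (Real.exp_pos _).le
  have hMnonneg : 0 ≤ M := le_trans (Real.exp_pos _).le (le_max_right _ _)
  have key : ∀ n : ℕ, Λ n ≤ M := by
    intro n
    induction n using Nat.strong_induction_on with
    | _ n ih =>
      rcases le_or_gt n K with h | h
      · exact (hmono h).trans (le_max_left _ _)
      · have hn1 : Λ (n - 1) ≤ M := ih (n - 1) (by omega)
        have hnK : Λ (n - K) ≤ M := ih (n - K) (by omega)
        refine (hrec n h).trans (max_le hn1 ?_)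
        have h1 : Real.exp (-C₂ * K) * (Λ (n - K)) ^ 2 ≤ C₁ * K := by
          calc Real.exp (-C₂ * K) * (Λ (n - K)) ^ 2
              ≤ Real.exp (-C₂ * K) *
                (Real.exp (C₄ * Real.sqrt K) + Real.exp (C₃ * Real.sqrt (2 * C₁ * K))) ^ 2 := by
                apply mul_le_mul_of_nonneg_left _ (Real.exp_pos _).le
                apply pow_le_pow_left₀ (le_trans zero_le_one (hge1 _)) (hnK.trans hMsum)
            _ ≤ C₁ * K := hKbig
        have h2 : C₁ * K + Real.exp (-C₂ * K) * (Λ (n - K)) ^ 2 ≤ 2 * C₁ * K := by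
          nlinarith
        calc Real.exp (C₃ * Real.sqrt (C₁ * K + Real.exp (-C₂ * K) * (Λ (n - K)) ^ 2))
            ≤ Real.exp (C₃ * Real.sqrt (2 * C₁ * K)) := by
              apply Real.exp_le_exp.mpr
              exact mul_le_mul_of_nonneg_left (Real.sqrt_le_sqrt h2) hC₃.le
          _ ≤ M := le_max_right _ _
  exact ⟨key, ⟨M, fun x ⟨n, hn⟩ => hn ▸ key n⟩⟩
end

section
/- Let λ : (0,1] → (0,∞) and C > 0 satisfy: (i) exp(−C) ≤ λ(1) ≤ exp(C); (ii) for every integer n ≥ 0 and every r ∈ [0,1], exp(−C)·λ(2^{-n}) ≤ λ(2^{-(n+r)}) ≤ exp(C)·λ(2^{-n}); and (iii) for all integers n, n' ≥ 1, exp(−C·√(min(n,n')))·λ(2^{-n})·λ(2^{-n'}) ≤ λ(2^{-(n+n')}) ≤ exp(C·√(min(n,n')))·λ(2^{-n})·λ(2^{-n'}). Then there exists C' > 0, depending only on C, such that for all δ, δ' ∈ (0,1), C'^{-1}·exp(−C'·√(1 + |log(max(δ,δ'))|))·λ(δ)·λ(δ') ≤ λ(δ·δ') ≤ C'·exp(C'·√(1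 + |log(max(δ,δ'))|))·λ(δ)·λ(δ'). -/
set_option maxHeartbeats 2000000 in
/-- Interpolation of weak multiplicativity from dyadic scales to all scales:
`λ(δδ') ≍ λ(δ)λ(δ')·exp(±C'√(1+|log(δ∨δ')|))` for all `δ, δ' ∈ (0,1)`. -/
theorem weak_multiplicativity_interpolation
    (lam : ℝ → ℝ) (C : ℝ) (hC : 0 < C)
    (hpos : ∀ δ ∈ Set.Ioc (0 : ℝ) 1, 0 < lam δ)
    (h1 : Real.exp (-C) ≤ lam 1 ∧ lam 1 ≤ Real.exp C)
    (h2 : ∀ n : ℕ, ∀ r ∈ Set.Icc (0 : ℝ) 1,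
      Real.exp (-C) * lam ((2 : ℝ) ^ (-(n : ℝ))) ≤ lam ((2 : ℝ) ^ (-((n : ℝ) + r))) ∧
      lam ((2 : ℝ) ^ (-((n : ℝ) + r))) ≤ Real.exp C * lam ((2 : ℝ) ^ (-(n : ℝ))))
    (h3 : ∀ n n' : ℕ, 1 ≤ n → 1 ≤ n' →
      Real.exp (-C * Real.sqrt (min n n' : ℕ)) *
          lam ((2 : ℝ) ^ (-(n : ℝ))) * lam ((2 : ℝ) ^ (-(n' : ℝ))) ≤
        lam ((2 : ℝ) ^ (-((n : ℝ) + (n' : ℝ)))) ∧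
      lam ((2 : ℝ) ^ (-((n : ℝ) + (n' : ℝ)))) ≤
        Real.exp (C * Real.sqrt (min n n' : ℕ)) *
          lam ((2 : ℝ) ^ (-(n : ℝ))) * lam ((2 : ℝ) ^ (-(n' : ℝ)))) :
    ∃ C' : ℝ, 0 < C' ∧ ∀ δ ∈ Set.Ioo (0 : ℝ) 1, ∀ δ' ∈ Set.Ioo (0 : ℝ) 1,
      C'⁻¹ * Real.exp (-C' * Real.sqrt (1 + |Real.log (max δ δ')|)) * lam δ * lam δ' ≤
        lam (δ * δ') ∧
      lam (δ * δ') ≤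
        C' * Real.exp (C' * Real.sqrt (1 + |Real.log (max δ δ')|)) * lam δ * lam δ' := by
  obtain ⟨h1l, h1u⟩ := h1
  -- positivity at all nonnegative exponents
  have hposx : ∀ x : ℝ, 0 ≤ x → 0 < lam ((2:ℝ) ^ (-x)) := by
    intro x hx
    apply hpos
    constructor
    · positivity
    · calc (2:ℝ)^(-x) ≤ (2:ℝ)^(0:ℝ) :=
            Real.rpow_le_rpow_of_exponent_le one_le_two (by linarith)
        _ = 1 := Real.rpow_zero 2
  -- Lemma A : comparison with the floor
  have hA : ∀ x : ℝ, 0 ≤ x →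
      Real.exp (-C) * lam ((2:ℝ)^(-(⌊x⌋₊ : ℝ))) ≤ lam ((2:ℝ)^(-x)) ∧
      lam ((2:ℝ)^(-x)) ≤ Real.exp C * lam ((2:ℝ)^(-(⌊x⌋₊ : ℝ))) := by
    intro x hx
    have hfl : (⌊x⌋₊ : ℝ) ≤ x := Nat.floor_le hx
    have hfl2 : x < ⌊x⌋₊ + 1 := Nat.lt_floor_add_one x
    have h := h2 ⌊x⌋₊ (x - ⌊x⌋₊) ⟨by linarith, by linarith⟩
    have hxe : -((⌊x⌋₊:ℝ) + (x - ⌊x⌋₊)) = -x := by ring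
    rw [hxe] at h
    exact h
  -- Lemma B : consecutive integers
  have hB : ∀ n : ℕ,
      Real.exp (-C) * lam ((2:ℝ)^(-(n : ℝ))) ≤ lam ((2:ℝ)^(-((n:ℝ)+1))) ∧
      lam ((2:ℝ)^(-((n:ℝ)+1))) ≤ Real.exp C * lam ((2:ℝ)^(-(n : ℝ))) :=
    fun n => h2 n 1 ⟨zero_le_one, le_refl 1⟩
  -- Lemma D : dyadic multiplicativity including the edge cases
  have hD : ∀ n n' : ℕ,
      Real.exp (-(C * Real.sqrt (min n n' : ℕ) + C)) *
          (lam ((2:ℝ)^(-(n:ℝ))) * lam ((2:ℝ)^(-(n':ℝ)))) ≤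
        lam ((2:ℝ)^(-((n:ℝ)+(n':ℝ)))) ∧
      lam ((2:ℝ)^(-((n:ℝ)+(n':ℝ)))) ≤
        Real.exp (C * Real.sqrt (min n n' : ℕ) + C) *
          (lam ((2:ℝ)^(-(n:ℝ))) * lam ((2:ℝ)^(-(n':ℝ)))) := by
    intro n n'
    rcases Nat.eq_zero_or_pos n with hn | hn
    · subst hn
      have he : (-(((0:ℕ):ℝ) + (n':ℝ))) = -(n':ℝ) := by push_cast; ring
      have he0 : ((2:ℝ)^(-((0:ℕ):ℝ))) = 1 := by norm_num
      have hs : Real.sqrt (min 0 n' : ℕ) = 0 := by simp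
      rw [he, he0, hs]
      have hp := hposx n' (by positivity)
      constructor
      · calc Real.exp (-(C * 0 + C)) * (lam 1 * lam ((2:ℝ)^(-(n':ℝ))))
            ≤ Real.exp (-(C*0+C)) * (Real.exp C * lam ((2:ℝ)^(-(n':ℝ)))) := by
              gcongr
          _ = lam ((2:ℝ)^(-(n':ℝ))) := by
              rw [show -(C*0+C) = -C by ring, ← mul_assoc, ← Real.exp_add]; simp
      · calc lam ((2:ℝ)^(-(n':ℝ)))
            = Real.exp C * (Real.exp (-C) * lam ((2:ℝ)^(-(n':ℝ)))) := by
              rw [← mul_assoc, ← Real.exp_add]; simp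
          _ ≤ Real.exp C * (lam 1 * lam ((2:ℝ)^(-(n':ℝ)))) := by gcongr
          _ = Real.exp (C * 0 + C) * (lam 1 * lam ((2:ℝ)^(-(n':ℝ)))) := by
              rw [show C*0+C = C by ring]
    rcases Nat.eq_zero_or_pos n' with hn' | hn'
    · subst hn'
      have he : (-((n:ℝ) + ((0:ℕ):ℝ))) = -(n:ℝ) := by push_cast; ring
      have he0 : ((2:ℝ)^(-((0:ℕ):ℝ))) = 1 := by norm_num
      have hs : Real.sqrt (min n 0 : ℕ) = 0 := by simp
      rw [he, he0, hs]
      have hp := hposx n (by positivity)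
      constructor
      · calc Real.exp (-(C * 0 + C)) * (lam ((2:ℝ)^(-(n:ℝ))) * lam 1)
            ≤ Real.exp (-(C*0+C)) * (lam ((2:ℝ)^(-(n:ℝ))) * Real.exp C) := by
              gcongr
          _ = lam ((2:ℝ)^(-(n:ℝ))) := by
              rw [show -(C*0+C) = -C by ring, mul_comm (lam _), ← mul_assoc,
                ← Real.exp_add]; simp
      · calc lam ((2:ℝ)^(-(n:ℝ)))
            = Real.exp C * (lam ((2:ℝ)^(-(n:ℝ))) * Real.exp (-C)) := by
              rw [mul_comm (lam _), ← mul_assoc, ← Real.exp_add]; simp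
          _ ≤ Real.exp C * (lam ((2:ℝ)^(-(n:ℝ))) * lam 1) := by gcongr
          _ = Real.exp (C * 0 + C) * (lam ((2:ℝ)^(-(n:ℝ))) * lam 1) := by
              rw [show C*0+C = C by ring]
    · obtain ⟨hl, hu⟩ := h3 n n' hn hn'
      have hpn := hposx n (by positivity)
      have hpn' := hposx n' (by positivity)
      have hsq : (0:ℝ) ≤ Real.sqrt (min n n' : ℕ) := Real.sqrt_nonneg _
      constructor
      · refine le_trans ?_ hl
        rw [mul_assoc (Real.exp _)]
        have : Real.exp (-(C * Real.sqrt (min n n' : ℕ) + C)) ≤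
            Real.exp (-C * Real.sqrt (min n n' : ℕ)) := by
          apply Real.exp_le_exp.2; nlinarith
        nlinarith [mul_pos hpn hpn']
      · refine le_trans hu ?_
        rw [mul_assoc (Real.exp _)]
        have : Real.exp (C * Real.sqrt (min n n' : ℕ)) ≤
            Real.exp (C * Real.sqrt (min n n' : ℕ) + C) := by
          apply Real.exp_le_exp.2; nlinarith
        nlinarith [mul_pos hpn hpn']
  -- master estimate at real exponents
  have key : ∀ x > (0:ℝ), ∀ x' > (0:ℝ),
      Real.exp (-(5*C + C * Real.sqrt (min ⌊x⌋₊ ⌊x'⌋₊ : ℕ))) *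
          (lam ((2:ℝ)^(-x)) * lam ((2:ℝ)^(-x'))) ≤ lam ((2:ℝ)^(-(x+x'))) ∧
      lam ((2:ℝ)^(-(x+x'))) ≤
        Real.exp (5*C + C * Real.sqrt (min ⌊x⌋₊ ⌊x'⌋₊ : ℕ)) *
          (lam ((2:ℝ)^(-x)) * lam ((2:ℝ)^(-x'))) := by
    intro x hx x' hx'
    set n := ⌊x⌋₊ with hn
    set n' := ⌊x'⌋₊ with hn'
    set m := ⌊x + x'⌋₊ with hm
    have hxn : (n:ℝ) ≤ x := Nat.floor_le hx.le
    have hxn2 : x < n + 1 := Nat.lt_floor_add_one x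
    have hx'n : (n':ℝ) ≤ x' := Nat.floor_le hx'.le
    have hx'n2 : x' < n' + 1 := Nat.lt_floor_add_one x'
    have hmlb : n + n' ≤ m := Nat.le_floor (by push_cast; linarith)
    have hmub : m ≤ n + n' + 1 := by
      have h1 : (m:ℝ) ≤ x + x' := Nat.floor_le (by linarith)
      have : (m:ℝ) < (n:ℝ) + n' + 2 := by linarith
      have : m < n + n' + 2 := by exact_mod_cast this
      omega
    -- step 1 : lam(2^{-(x+x')}) vs lam(2^{-m})
    obtain ⟨hA1l, hA1u⟩ := hA (x+x') (by linarith)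
    -- step 2 : lam(2^{-m}) vs lam(2^{-(n+n')})
    have step2 :
        Real.exp (-C) * lam ((2:ℝ)^(-((n:ℝ)+(n':ℝ)))) ≤ lam ((2:ℝ)^(-(m:ℝ))) ∧
        lam ((2:ℝ)^(-(m:ℝ))) ≤ Real.exp C * lam ((2:ℝ)^(-((n:ℝ)+(n':ℝ)))) := by
      rcases eq_or_lt_of_le hmlb with he | hlt
      · have : (-(m:ℝ)) = -((n:ℝ)+(n':ℝ)) := by rw [← he]; push_cast; ring
        rw [this]
        have hp := hposx ((n:ℝ)+(n':ℝ)) (by positivity)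
        constructor
        · nlinarith [Real.exp_le_one_iff.2 (by linarith : -C ≤ 0)]
        · nlinarith [Real.one_le_exp (by linarith : (0:ℝ) ≤ C)]
      · have hme : m = n + n' + 1 := by omega
        have hcast : (-(m:ℝ)) = -(((n+n' : ℕ):ℝ) + 1) := by rw [hme]; push_cast; ring
        have hcast2 : (-(((n+n':ℕ)):ℝ)) = -((n:ℝ)+(n':ℝ)) := by push_cast; ring
        have := hB (n+n')
        rw [hcast2] at this
        rw [hcast]
        exact this
    obtain ⟨h2l, h2u⟩ := step2
    -- step 3 : dyadic multiplicativity
    obtain ⟨h3l, h3u⟩ := hD n n'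
    -- step 4 : lam(2^{-n}) vs lam(2^{-x}), lam(2^{-n'}) vs lam(2^{-x'})
    obtain ⟨h4l, h4u⟩ := hA x hx.le
    obtain ⟨h5l, h5u⟩ := hA x' hx'.le
    rw [← hn] at h4l h4u
    rw [← hn'] at h5l h5u
    have hpn := hposx (n:ℝ) (by positivity)
    have hpn' := hposx (n':ℝ) (by positivity)
    have hpx := hposx x hx.le
    have hpx' := hposx x' hx'.le
    have hps := hposx ((n:ℝ)+(n':ℝ)) (by positivity)
    have hpm := hposx (m:ℝ) (by positivity)
    have hpxx := hposx (x+x') (by linarith)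
    set S := Real.sqrt (min n n' : ℕ) with hS
    have hS0 : 0 ≤ S := Real.sqrt_nonneg _
    have eC := Real.exp_pos C
    have eCn := Real.exp_pos (-C)
    have hee : Real.exp (-C) * Real.exp C = 1 := by rw [← Real.exp_add]; simp
    have hee2 : Real.exp C * Real.exp (-C) = 1 := by rw [← Real.exp_add]; simp
    have hn_ge : Real.exp (-C) * lam ((2:ℝ)^(-x)) ≤ lam ((2:ℝ)^(-(n:ℝ))) := by
      have h := mul_le_mul_of_nonneg_left h4u eCn.le
      rwa [← mul_assoc, hee, one_mul] at h
    have hn'_ge : Real.exp (-C) * lam ((2:ℝ)^(-x')) ≤ lam ((2:ℝ)^(-(n':ℝ))) := by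
      have h := mul_le_mul_of_nonneg_left h5u eCn.le
      rwa [← mul_assoc, hee, one_mul] at h
    have hn_le : lam ((2:ℝ)^(-(n:ℝ))) ≤ Real.exp C * lam ((2:ℝ)^(-x)) := by
      have h := mul_le_mul_of_nonneg_left h4l eC.le
      rwa [← mul_assoc, hee2, one_mul] at h
    have hn'_le : lam ((2:ℝ)^(-(n':ℝ))) ≤ Real.exp C * lam ((2:ℝ)^(-x')) := by
      have h := mul_le_mul_of_nonneg_left h5l eC.le
      rwa [← mul_assoc, hee2, one_mul] at h
    constructor
    · -- lower bound
      have d1 : Real.exp (-C) * lam ((2:ℝ)^(-x)) * (Real.exp (-C) * lam ((2:ℝ)^(-x'))) ≤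
          lam ((2:ℝ)^(-(n:ℝ))) * lam ((2:ℝ)^(-(n':ℝ))) :=
        mul_le_mul hn_ge hn'_ge (by positivity) hpn.le
      have d2 := mul_le_mul_of_nonneg_left d1 (Real.exp_pos (-(C*S+C))).le
      have d3 := d2.trans h3l
      have d4 := (mul_le_mul_of_nonneg_left d3 eCn.le).trans h2l
      have hA1l' : Real.exp (-C) * lam ((2:ℝ)^(-(m:ℝ))) ≤ lam ((2:ℝ)^(-(x+x'))) := by
        rw [hm]; exact hA1l
      have d5 := (mul_le_mul_of_nonneg_left d4 eCn.le).trans hA1l'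
      refine le_trans (le_of_eq ?_) d5
      rw [show (-(5*C + C*S)) = (-C) + ((-C) + ((-(C*S+C)) + ((-C) + (-C)))) by ring]
      simp only [Real.exp_add]
      ring
    · -- upper bound
      have d1 : lam ((2:ℝ)^(-(n:ℝ))) * lam ((2:ℝ)^(-(n':ℝ))) ≤
          Real.exp C * lam ((2:ℝ)^(-x)) * (Real.exp C * lam ((2:ℝ)^(-x'))) :=
        mul_le_mul hn_le hn'_le hpn'.le (by positivity)
      have d2 := mul_le_mul_of_nonneg_left d1 (Real.exp_pos (C*S+C)).le
      have d3 := h3u.trans d2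
      have d4 := h2u.trans (mul_le_mul_of_nonneg_left d3 eC.le)
      have d5 : lam ((2:ℝ)^(-(x+x'))) ≤ Real.exp C *
          (Real.exp C * (Real.exp (C*S+C) *
            (Real.exp C * lam ((2:ℝ)^(-x)) * (Real.exp C * lam ((2:ℝ)^(-x')))))) := by
        refine le_trans ?_ (mul_le_mul_of_nonneg_left d4 eC.le)
        rw [hm]; exact hA1u
      refine le_trans d5 (le_of_eq ?_)
      rw [show (5*C + C*S) = C + (C + ((C*S+C) + (C + C))) by ring]
      simp only [Real.exp_add]
      ring
  -- now choose C' and conclude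
  refine ⟨7*C + 1, by linarith, ?_⟩
  intro δ hδ δ' hδ'
  obtain ⟨hδ0, hδ1⟩ := hδ
  obtain ⟨hδ'0, hδ'1⟩ := hδ'
  set x := -Real.logb 2 δ with hxdef
  set x' := -Real.logb 2 δ' with hx'def
  have hb : (1:ℝ) < 2 := one_lt_two
  have hx : 0 < x := by
    have := Real.logb_neg hb hδ0 hδ1
    simp only [hxdef]; linarith
  have hx' : 0 < x' := by
    have := Real.logb_neg hb hδ'0 hδ'1
    simp only [hx'def]; linarith
  have hδx : (2:ℝ)^(-x) = δ := by
    rw [hxdef, neg_neg]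
    exact Real.rpow_logb two_pos (by norm_num) hδ0
  have hδ'x : (2:ℝ)^(-x') = δ' := by
    rw [hx'def, neg_neg]
    exact Real.rpow_logb two_pos (by norm_num) hδ'0
  have hprod : (2:ℝ)^(-(x+x')) = δ * δ' := by
    rw [show -(x+x') = (-x) + (-x') by ring, Real.rpow_add two_pos, hδx, hδ'x]
  obtain ⟨hkl, hku⟩ := key x hx x' hx'
  rw [hδx, hδ'x, hprod] at hkl hku
  -- bound the sqrt term
  set L := |Real.log (max δ δ')| with hL
  have hL0 : 0 ≤ L := abs_nonneg _
  have hs1 : 1 ≤ Real.sqrt (1 + L) := by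
    nlinarith [Real.sq_sqrt (by linarith : (0:ℝ) ≤ 1 + L), Real.sqrt_nonneg (1 + L)]
  have hminL : (min ⌊x⌋₊ ⌊x'⌋₊ : ℕ) * Real.log 2 ≤ L := by
    have hmx : ((min ⌊x⌋₊ ⌊x'⌋₊ : ℕ) : ℝ) ≤ min x x' := by
      have h1 : ((min ⌊x⌋₊ ⌊x'⌋₊ : ℕ) : ℝ) ≤ (⌊x⌋₊ : ℝ) := by
        exact_mod_cast Nat.cast_le.2 (min_le_left _ _)
      have h2 : ((min ⌊x⌋₊ ⌊x'⌋₊ : ℕ) : ℝ) ≤ (⌊x'⌋₊ : ℝ) := by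
        exact_mod_cast Nat.cast_le.2 (min_le_right _ _)
      exact le_min (h1.trans (Nat.floor_le hx.le)) (h2.trans (Nat.floor_le hx'.le))
    have hlog2 : (0:ℝ) < Real.log 2 := Real.log_pos hb
    have hLx : min x x' * Real.log 2 = L := by
      rw [hL]
      rcases le_total δ δ' with hdd | hdd
      · rw [max_eq_right hdd]
        have : min x x' = x' := by
          apply min_eq_right
          rw [hxdef, hx'def, neg_le_neg_iff]
          exact Real.logb_le_logb_of_le one_lt_two hδ0 hdd
        rw [this, hx'def, Real.logb, abs_of_neg (Real.log_neg hδ'0 hδ'1)]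
        field_simp
      · rw [max_eq_left hdd]
        have : min x x' = x := by
          apply min_eq_left
          rw [hxdef, hx'def, neg_le_neg_iff]
          exact Real.logb_le_logb_of_le one_lt_two hδ'0 hdd
        rw [this, hxdef, Real.logb, abs_of_neg (Real.log_neg hδ0 hδ1)]
        field_simp
    calc ((min ⌊x⌋₊ ⌊x'⌋₊ : ℕ):ℝ) * Real.log 2 ≤ min x x' * Real.log 2 := by
          apply mul_le_mul_of_nonneg_right hmx hlog2.le
      _ = L := hLx
  have hsqS : Real.sqrt (min ⌊x⌋₊ ⌊x'⌋₊ : ℕ) ≤ 2 * Real.sqrt (1 + L) := by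
    have hlog2 : (0.6931471803:ℝ) < Real.log 2 := Real.log_two_gt_d9
    have hm4 : ((min ⌊x⌋₊ ⌊x'⌋₊ : ℕ):ℝ) ≤ 4 * (1 + L) := by
      nlinarith [(by positivity : (0:ℝ) ≤ ((min ⌊x⌋₊ ⌊x'⌋₊ : ℕ):ℝ))]
    calc Real.sqrt (min ⌊x⌋₊ ⌊x'⌋₊ : ℕ) ≤ Real.sqrt (4 * (1+L)) := Real.sqrt_le_sqrt hm4
      _ = 2 * Real.sqrt (1+L) := by
          rw [Real.sqrt_mul (by norm_num), show (4:ℝ) = 2^2 by norm_num,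
            Real.sqrt_sq (by norm_num)]
  -- final exponent comparison
  have hexp : 5*C + C * Real.sqrt (min ⌊x⌋₊ ⌊x'⌋₊ : ℕ) ≤ (7*C+1) * Real.sqrt (1+L) := by
    have h1 : C * Real.sqrt (min ⌊x⌋₊ ⌊x'⌋₊ : ℕ) ≤ 2*C * Real.sqrt (1+L) := by
      nlinarith
    nlinarith
  have hlamp := hpos δ ⟨hδ0, hδ1.le⟩
  have hlamp' := hpos δ' ⟨hδ'0, hδ'1.le⟩
  have hC'1 : (1:ℝ) ≤ 7*C + 1 := by linarith
  constructor
  · refine le_trans ?_ hkl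
    have e1 : Real.exp (-(7*C+1) * Real.sqrt (1+L)) ≤
        Real.exp (-(5*C + C * Real.sqrt (min ⌊x⌋₊ ⌊x'⌋₊ : ℕ))) := by
      apply Real.exp_le_exp.2; nlinarith
    have hinv : (7*C+1)⁻¹ ≤ 1 := by
      rw [inv_le_one_iff₀]; right; linarith
    have hinvp : (0:ℝ) < (7*C+1)⁻¹ := by positivity
    calc (7*C+1)⁻¹ * Real.exp (-(7*C+1) * Real.sqrt (1+L)) * lam δ * lam δ'
        ≤ 1 * Real.exp (-(5*C + C * Real.sqrt (min ⌊x⌋₊ ⌊x'⌋₊ : ℕ))) * lam δ * lam δ' := by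
          have := Real.exp_pos (-(7*C+1) * Real.sqrt (1+L))
          gcongr
      _ = Real.exp (-(5*C + C * Real.sqrt (min ⌊x⌋₊ ⌊x'⌋₊ : ℕ))) * (lam δ * lam δ') := by
          ring
  · refine le_trans hku ?_
    have e1 : Real.exp (5*C + C * Real.sqrt (min ⌊x⌋₊ ⌊x'⌋₊ : ℕ)) ≤
        Real.exp ((7*C+1) * Real.sqrt (1+L)) := Real.exp_le_exp.2 hexp
    calc Real.exp (5*C + C * Real.sqrt (min ⌊x⌋₊ ⌊x'⌋₊ : ℕ)) * (lam δ * lam δ')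
        ≤ 1 * Real.exp ((7*C+1) * Real.sqrt (1+L)) * (lam δ * lam δ') := by
          rw [one_mul]; gcongr
      _ ≤ (7*C+1) * Real.exp ((7*C+1) * Real.sqrt (1+L)) * (lam δ * lam δ') := by
          have := Real.exp_pos ((7*C+1) * Real.sqrt (1+L))
          gcongr
      _ = (7*C+1) * Real.exp ((7*C+1) * Real.sqrt (1+L)) * lam δ * lam δ' := by ring
end
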